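/- Let G be the group with generators a₁, b₁, a₂, b₂ and, writing r = b₁⁻¹a₂b₂, with defining relators [a₁,b₁][a₂,b₂], a₁r², a₁b₁⁻²ra₂, a₁b₁⁻⁴ra₂r⁻¹a₂, a₁b₁a₁⁻¹a₂b₂a₂⁻¹, a₁b₁a₁⁻¹b₂⁻¹a₂⁻¹r, [r, a₂⁻¹], and [a₁,b₁] (where [x,y] = xyx⁻¹y⁻¹). Then G is a free abelian group of rank 2, isomorphic to ℤ × ℤ, generated by the images of a₂ and b₂. -/

import Mathlib

namespace SmallestGenusTwo

/-- Generators `a₁, b₁, a₂, b₂` of the free group on four letters. -/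
def a₁ : FreeGroup (Fin 4) := FreeGroup.of 0
def b₁ : FreeGroup (Fin 4) := FreeGroup.of 1
def a₂ : FreeGroup (Fin 4) := FreeGroup.of 2
def b₂ : FreeGroup (Fin 4) := FreeGroup.of 3

/-- `r = b₁⁻¹ a₂ b₂`. -/
def r : FreeGroup (Fin 4) := b₁⁻¹ * a₂ * b₂

/-- The relators induced by the vanishing cycles `x₁, x₂, x₃, x₄, e, d, c`
of the smallest genus-2 Lefschetz fibration `(X₁, f₁)`, together with the
surface relator `[a₁,b₁][a₂,b₂]`. -/
def rels : Set (FreeGroup (Fin 4)) :=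
  { (a₁ * b₁ * a₁⁻¹ * b₁⁻¹) * (a₂ * b₂ * a₂⁻¹ * b₂⁻¹),
    a₁ * r ^ 2,
    a₁ * b₁⁻¹ * b₁⁻¹ * r * a₂,
    a₁ * b₁⁻¹ * b₁⁻¹ * b₁⁻¹ * b₁⁻¹ * r * a₂ * r⁻¹ * a₂,
    a₁ * b₁ * a₁⁻¹ * a₂ * b₂ * a₂⁻¹,
    a₁ * b₁ * a₁⁻¹ * b₂⁻¹ * a₂⁻¹ * r,
    r * a₂⁻¹ * r⁻¹ * a₂,
    a₁ * b₁ * a₁⁻¹ * b₁⁻¹ }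

/-!
The relator `[a₁,b₁]` and then the surface relator make both pairs `a₁, b₁` and `a₂, b₂` commute.
The relator `a₁b₁a₁⁻¹a₂b₂a₂⁻¹` then reduces to `b₁b₂ = 1`, and `a₁r²` to `a₁ = (a₂²b₂⁴)⁻¹`, so the
group is generated by the commuting elements `a₂, b₂`. Accordingly `a₁ ↦ (-2, -4)`, `b₁ ↦ (0, -1)`,
`a₂ ↦ (1, 0)`, `b₂ ↦ (0, 1)` kills every relator, and the resulting map to `ℤ²` is inverse to
`(m, n) ↦ a₂ᵐb₂ⁿ`.
-/

section CommutingPair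

variable {G : Type*} [Group G]

def zpowPairHom {x y : G} (h : Commute x y) : Multiplicative (ℤ × ℤ) →* G :=
  MonoidHom.mk' (fun p => x ^ p.toAdd.1 * y ^ p.toAdd.2) fun p q => by
    simp only [toAdd_mul, Prod.fst_add, Prod.snd_add, zpow_add]
    exact ((h.zpow_zpow q.toAdd.1 p.toAdd.2).symm.mul_mul_mul_comm _ _).symm

theorem nonempty_mulEquiv_of_closure_pair_eq_top {x y : G} (hxy : Commute x y)
    (hgen : Subgroup.closure {x, y} = ⊤) (φ : G →* Multiplicative (ℤ × ℤ))
    (hx : φ x = .ofAdd (1, 0)) (hy : φ y = .ofAdd (0, 1)) :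
    Nonempty (G ≃* Multiplicative (ℤ × ℤ)) := by
  refine ⟨φ.toMulEquiv (zpowPairHom hxy) ?_ ?_⟩
  · refine MonoidHom.eq_of_eqOn_dense hgen ?_
    rintro _ (rfl | rfl) <;> simp [zpowPairHom, hx, hy]
  · refine MonoidHom.ext fun p => Multiplicative.toAdd.injective ?_
    simp [zpowPairHom, hx, hy]

end CommutingPair

def A₁ : PresentedGroup rels := .of 0
def B₁ : PresentedGroup rels := .of 1
def A₂ : PresentedGroup rels := .of 2
def B₂ : PresentedGroup rels := .of 3

@[simp] lemma mk_a₁ : PresentedGroup.mk rels a₁ = A₁ := rfl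
@[simp] lemma mk_b₁ : PresentedGroup.mk rels b₁ = B₁ := rfl
@[simp] lemma mk_a₂ : PresentedGroup.mk rels a₂ = A₂ := rfl
@[simp] lemma mk_b₂ : PresentedGroup.mk rels b₂ = B₂ := rfl

lemma commute_A₁_B₁ : Commute A₁ B₁ := by
  have h := PresentedGroup.one_of_mem (show a₁ * b₁ * a₁⁻¹ * b₁⁻¹ ∈ rels by simp [rels])
  simp only [map_mul, map_inv, mk_a₁, mk_b₁] at h
  exact commutatorElement_eq_one_iff_commute.mp h

lemma commute_A₂_B₂ : Commute A₂ B₂ := by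
  have h := PresentedGroup.one_of_mem
    (show (a₁ * b₁ * a₁⁻¹ * b₁⁻¹) * (a₂ * b₂ * a₂⁻¹ * b₂⁻¹) ∈ rels by simp [rels])
  simp only [map_mul, map_inv, mk_a₁, mk_b₁, mk_a₂, mk_b₂] at h
  rw [← commutatorElement_def, ← commutatorElement_def,
    commutatorElement_eq_one_iff_commute.mpr commute_A₁_B₁, one_mul] at h
  exact commutatorElement_eq_one_iff_commute.mp h

lemma B₁_eq_B₂_inv : B₁ = B₂⁻¹ := by
  have h := PresentedGroup.one_of_mem (show a₁ * b₁ * a₁⁻¹ * a₂ * b₂ * a₂⁻¹ ∈ rels by simp [rels])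
  simp only [map_mul, map_inv, mk_a₁, mk_b₁, mk_a₂, mk_b₂] at h
  rw [mul_assoc _ A₂, mul_assoc _ (A₂ * B₂), commute_A₁_B₁.mul_inv_cancel,
    commute_A₂_B₂.mul_inv_cancel] at h
  exact eq_inv_of_mul_eq_one_left h

lemma A₁_eq_inv_A₂_sq_mul_B₂_pow_four : A₁ = (A₂ ^ 2 * B₂ ^ 4)⁻¹ := by
  have h := PresentedGroup.one_of_mem (show a₁ * r ^ 2 ∈ rels by simp [rels])
  have hr : PresentedGroup.mk rels r = A₂ * B₂ ^ 2 := by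
    simp only [r, map_mul, map_inv, mk_b₁, mk_a₂, mk_b₂, B₁_eq_B₂_inv, inv_inv]
    rw [commute_A₂_B₂.symm.eq, mul_assoc, sq]
  rw [map_mul, map_pow, hr, (commute_A₂_B₂.pow_right 2).mul_pow, ← pow_mul] at h
  exact eq_inv_of_mul_eq_one_left h

lemma closure_A₂_B₂_eq_top : Subgroup.closure {A₂, B₂} = ⊤ := by
  have hA₂ : A₂ ∈ Subgroup.closure {A₂, B₂} := Subgroup.subset_closure (by simp)
  have hB₂ : B₂ ∈ Subgroup.closure {A₂, B₂} := Subgroup.subset_closure (by simp)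
  rw [eq_top_iff, ← PresentedGroup.closure_range_of, Subgroup.closure_le]
  rintro _ ⟨i, rfl⟩
  fin_cases i
  · show A₁ ∈ _
    exact A₁_eq_inv_A₂_sq_mul_B₂_pow_four ▸ inv_mem (mul_mem (pow_mem hA₂ 2) (pow_mem hB₂ 4))
  · show B₁ ∈ _
    exact B₁_eq_B₂_inv ▸ inv_mem hB₂
  · exact hA₂
  · exact hB₂

def toIntProd : PresentedGroup rels →* Multiplicative (ℤ × ℤ) :=
  PresentedGroup.toGroup (f := ![.ofAdd (-2, -4), .ofAdd (0, -1), .ofAdd (1, 0), .ofAdd (0, 1)])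
    (by
      simp only [rels, Set.mem_insert_iff, Set.mem_singleton_iff]
      rintro w (rfl | rfl | rfl | rfl | rfl | rfl | rfl | rfl) <;>
      · simp only [a₁, b₁, a₂, b₂, r, map_mul, map_inv, map_pow, FreeGroup.lift_apply_of]
        decide)

/-- The group `G = π₁(X₁)` of the smallest genus-2 Lefschetz fibration is free
abelian of rank 2, isomorphic to `ℤ × ℤ`, generated by the images of `a₂` and `b₂`. -/
theorem pi1_smallest_fibration :
    Nonempty (PresentedGroup rels ≃* Multiplicative (ℤ × ℤ)) ∧
      Subgroup.closure
        ({PresentedGroup.of 2, PresentedGroup.of 3} : Set (PresentedGroup rels)) = ⊤ :=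
  ⟨nonempty_mulEquiv_of_closure_pair_eq_top commute_A₂_B₂ closure_A₂_B₂_eq_top toIntProd
    (PresentedGroup.toGroup.of _) (PresentedGroup.toGroup.of _), closure_A₂_B₂_eq_top⟩

end SmallestGenusTwo
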